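/- arXiv:2601.06370 — 2 statements merged into one kernel-verified Lean document; each statement's English description precedes it below -/
import Mathlib

section
/- The rank-one projection τ_3^{⊗n} (the 2^n × 2^n matrix with a single 1 in entry (2^n-1, 2^n-1)) equals (1/4)·[ I^{⊗n} + X^{⊗n}·C_n^- - X^{⊗n}·C_n^-·(I^{⊗(n-1)} ⊗ Z) - I^{⊗(n-1)} ⊗ Z ]. -/
open Matrix

/-- `X^{⊗n}`: the exchange matrix of size `2^n` (ones on the anti-diagonal). -/
def Xpow (n : ℕ) : Matrix (Fin (2^n)) (Fin (2^n)) ℝ :=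
  Matrix.of fun i j => if (i : ℕ) + (j : ℕ) = 2^n - 1 then 1 else 0

/-- The signed exchange matrix `C_n^-`: `+1` at the two anti-diagonal corners,
`-1` at the interior anti-diagonal entries, `0` elsewhere. -/
def Cnm (n : ℕ) : Matrix (Fin (2^n)) (Fin (2^n)) ℝ :=
  Matrix.of fun i j =>
    if ((i : ℕ) = 0 ∧ (j : ℕ) = 2^n - 1) ∨ ((i : ℕ) = 2^n - 1 ∧ (j : ℕ) = 0) then 1
    else if (i : ℕ) + (j : ℕ) = 2^n - 1 then -1 else 0

/-- `I^{⊗(n-1)} ⊗ Z`: the diagonal matrix whose j-th diagonal entry is `1` if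
`j` is even and `-1` if `j` is odd. -/
def IZ (n : ℕ) : Matrix (Fin (2^n)) (Fin (2^n)) ℝ :=
  Matrix.of fun i j => if i = j then (if (i : ℕ) % 2 = 0 then 1 else -1) else 0

/-- `τ₃^{⊗n}`: the matrix with a single `1` in entry `(2^n-1, 2^n-1)`. -/
def Tau3 (n : ℕ) : Matrix (Fin (2^n)) (Fin (2^n)) ℝ :=
  Matrix.of fun i j => if (i : ℕ) = 2^n - 1 ∧ (j : ℕ) = 2^n - 1 then 1 else 0

/-!
Since `X^{⊗n}` reverses rows, `X^{⊗n} C_n^-` is diagonal with entries `d_i = 1` at the corners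
`i = 0, 2^n - 1` and `-1` elsewhere, and `I^{⊗(n-1)} ⊗ Z` is diagonal with entries `z_i = (-1)^i`.
The bracket factors as `(1 + X^{⊗n} C_n^-)(1 - I^{⊗(n-1)} ⊗ Z)`, whose `i`-th diagonal entry
`(1 + d_i)(1 - z_i)` is `4` when `i` is an odd corner, i.e. `i = 2^n - 1`, and `0` otherwise.
-/

section

variable {n : ℕ}

theorem Xpow_apply_eq_ite_rev (i j : Fin (2^n)) :
    Xpow n i j = if j = i.rev then (1 : ℝ) else 0 := by
  simp only [Xpow, of_apply, Fin.ext_iff, Fin.val_rev]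
  congr 1
  apply propext
  omega

theorem Xpow_mul_apply (M : Matrix (Fin (2^n)) (Fin (2^n)) ℝ) (i j : Fin (2^n)) :
    (Xpow n * M) i j = M i.rev j := by
  simp [mul_apply, Xpow_apply_eq_ite_rev]

theorem Xpow_mul_Cnm_eq_diagonal :
    Xpow n * Cnm n =
      diagonal fun i : Fin (2^n) => if (i : ℕ) = 0 ∨ (i : ℕ) = 2^n - 1 then (1 : ℝ) else -1 := by
  ext i j
  have := i.isLt
  have := j.isLt
  simp only [Xpow_mul_apply, Cnm, diagonal_apply, of_apply, Fin.val_rev, Fin.ext_iff]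
  split_ifs <;> first | rfl | omega

theorem IZ_eq_diagonal :
    IZ n = diagonal fun i : Fin (2^n) => if (i : ℕ) % 2 = 0 then (1 : ℝ) else -1 := by
  ext i j
  simp [IZ, diagonal_apply]

theorem Tau3_eq_diagonal :
    Tau3 n = diagonal fun i : Fin (2^n) => if (i : ℕ) = 2^n - 1 then (1 : ℝ) else 0 := by
  ext i j
  have := i.isLt
  simp only [Tau3, diagonal_apply, of_apply, Fin.ext_iff]
  split_ifs <;> first | rfl | omega

end

theorem stmt_10 (n : ℕ) (hn : 1 ≤ n) :
    Tau3 n = (1/4 : ℝ) •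
      ((1 : Matrix (Fin (2^n)) (Fin (2^n)) ℝ) + Xpow n * Cnm n
        - Xpow n * Cnm n * IZ n - IZ n) := by
  have hfactor : ∀ A B : Matrix (Fin (2^n)) (Fin (2^n)) ℝ,
      1 + A - A * B - B = (1 + A) * (1 - B) := fun A B => by noncomm_ring
  have htwo : 2 ≤ 2^n := Nat.le_self_pow (by omega) 2
  have hlast_odd : (2^n - 1) % 2 = 1 := by
    have : 2 ∣ 2^n := dvd_pow_self 2 (by omega)
    omega
  rw [hfactor, Xpow_mul_Cnm_eq_diagonal, IZ_eq_diagonal, Tau3_eq_diagonal, ← diagonal_one,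
    diagonal_add, diagonal_sub, diagonal_mul_diagonal, ← diagonal_smul]
  congr 1
  funext i
  simp only [Pi.smul_apply, smul_eq_mul]
  split_ifs <;> norm_num <;> omega
end

section
/- The Neumann/Robin matrix A_{n,3} admits the ten-term decomposition A_{n,3} = ((-4+(a_0-a_1)h)/2)·I^{⊗n} + (1/2)·(I^{⊗(n-1)} ⊗ X) - (1/2)·X^{⊗n} + ((a_0+a_1)h/2)·(I^{⊗(n-1)} ⊗ Z) + S_n + S_n^† - (1/2)·C_n^- + ((a_0-a_1)h/2)·X^{⊗n}·C_n^- + ((a_0+a_1)h/2)·X^{⊗n}·C_n^-·(I^{⊗(n-1)} ⊗ Z) + (1/2)·X^{⊗n}·C_n^-·(I^{⊗(n-1)} ⊗ X), where every term is a unitary matrix scaled by a real coefficient. -/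
open Matrix

/-- The Neumann/Robin matrix `A_{n,3}`: the tridiagonal Dirichlet Laplacian
(diagonal `-2`, off-diagonals `1`) modified so that entry `(0,0)` is `-2+2a₀h`,
entry `(0,1)` is `2`, entry `(2^n-1, 2^n-2)` is `2`, and entry `(2^n-1, 2^n-1)`
is `-2-2a₁h`. -/
def A3 (n : ℕ) (a0 a1 h : ℝ) : Matrix (Fin (2^n)) (Fin (2^n)) ℝ :=
  Matrix.of fun i j =>
    if (i : ℕ) = 0 ∧ (j : ℕ) = 0 then -2 + 2*a0*h
    else if (i : ℕ) = 0 ∧ (j : ℕ) = 1 then 2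
    else if (i : ℕ) = 2^n - 1 ∧ (j : ℕ) = 2^n - 2 then 2
    else if (i : ℕ) = 2^n - 1 ∧ (j : ℕ) = 2^n - 1 then -2 - 2*a1*h
    else if (i : ℕ) = (j : ℕ) then -2
    else if (i : ℕ) + 1 = (j : ℕ) ∨ (j : ℕ) + 1 = (i : ℕ) then 1 else 0

/-- The cyclic increment matrix. -/
def Sn (n : ℕ) : Matrix (Fin (2^n)) (Fin (2^n)) ℝ :=
  Matrix.of fun i j => if (i : ℕ) = ((j : ℕ) + 1) % 2^n then 1 else 0

/-- `I^{⊗(n-1)} ⊗ X`: the permutation matrix flipping the last bit. -/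
def IX (n : ℕ) : Matrix (Fin (2^n)) (Fin (2^n)) ℝ :=
  Matrix.of fun i j => if (i : ℕ) / 2 = (j : ℕ) / 2 ∧ (i : ℕ) ≠ (j : ℕ) then 1 else 0

/-!
All ten matrices are signed permutation matrices. `X^{⊗n}`, `S_n` and `I^{⊗(n-1)} ⊗ X` are the
permutation matrices of `Fin.rev`, of the cyclic shift and of flipping the lowest binary digit,
`I^{⊗(n-1)} ⊗ Z` is diagonal with entries `±1`, and `C_n^- = D X^{⊗n}` with
`D = diag(1, -1, …, -1, 1)`; as `D` is invariant under reversal, `X^{⊗n} C_n^- = D`. So every term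
lies in the orthogonal group, which is closed under products.

In the identity, `S_n + S_nᵀ` is the periodic tridiagonal part, whose two corner entries are
cancelled by `-(X^{⊗n} + C_n^-)/2`; `(1 + D)(I^{⊗(n-1)} ⊗ X)/2` supplies the extra `1` at `(0, 1)`
and `(2^n-1, 2^n-2)`; and the diagonal terms add up to `-2 + (1 + D)((a₀ - a₁) + (a₀ + a₁) Z) h/2`,
which is `-2` inside and `-2 + 2a₀h`, `-2 - 2a₁h` at the two ends (the last index is odd).
-/

theorem add_one_mod_of_lt {m N : ℕ} (h : m < N) :
    (m + 1) % N = if m + 1 = N then 0 else m + 1 := by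
  split_ifs with hN
  · rw [hN, Nat.mod_self]
  · exact Nat.mod_eq_of_lt (by omega)

section OrthogonalGroup

variable {ι R : Type*} [Fintype ι] [DecidableEq ι] [CommRing R]

theorem permMatrix_mem_orthogonalGroup (σ : Equiv.Perm ι) :
    σ.permMatrix R ∈ orthogonalGroup ι R := by
  rw [mem_orthogonalGroup_iff, transpose_permMatrix, ← permMatrix_mul, inv_mul_cancel,
    permMatrix_one]

theorem diagonal_mem_orthogonalGroup {d : ι → R} (hd : ∀ i, d i * d i = 1) :
    diagonal d ∈ orthogonalGroup ι R := by
  rw [mem_orthogonalGroup_iff, diagonal_transpose, diagonal_mul_diagonal]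
  simp only [hd, diagonal_one]

end OrthogonalGroup

def Fin.flipLowBit {N : ℕ} (hN : 2 ∣ N) : Equiv.Perm (Fin N) :=
  Function.Involutive.toPerm
    (fun i => ⟨if (i : ℕ) % 2 = 0 then i + 1 else i - 1, by have := i.isLt; split_ifs <;> omega⟩)
    (fun i => Fin.ext (by dsimp only; split_ifs <;> omega))

@[simp]
theorem Fin.val_flipLowBit {N : ℕ} (hN : 2 ∣ N) (i : Fin N) :
    (flipLowBit hN i : ℕ) = if (i : ℕ) % 2 = 0 then (i : ℕ) + 1 else (i : ℕ) - 1 :=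
  rfl

def endpointSign (n : ℕ) (i : Fin (2 ^ n)) : ℝ :=
  if (i : ℕ) = 0 ∨ (i : ℕ) = 2 ^ n - 1 then 1 else -1

def paritySign (n : ℕ) (i : Fin (2 ^ n)) : ℝ := if (i : ℕ) % 2 = 0 then 1 else -1

theorem endpointSign_mul_self (n : ℕ) (i : Fin (2 ^ n)) :
    endpointSign n i * endpointSign n i = 1 := by
  unfold endpointSign; split_ifs <;> norm_num

theorem paritySign_mul_self (n : ℕ) (i : Fin (2 ^ n)) : paritySign n i * paritySign n i = 1 := by
  unfold paritySign; split_ifs <;> norm_num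

theorem Xpow_eq_permMatrix (n : ℕ) : Xpow n = Fin.revPerm.permMatrix ℝ := by
  ext i j
  simp only [Xpow, of_apply, PEquiv.toMatrix_apply, Equiv.toPEquiv_apply, Option.mem_some_iff,
    Fin.revPerm_apply, Fin.ext_iff, Fin.val_rev]
  have := i.isLt
  congr 1
  exact propext (by omega)

theorem IX_eq_permMatrix {n : ℕ} (hn : n ≠ 0) :
    IX n = (Fin.flipLowBit (dvd_pow_self 2 hn)).permMatrix ℝ := by
  ext i j
  simp only [IX, of_apply, PEquiv.toMatrix_apply, Equiv.toPEquiv_apply, Option.mem_some_iff,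
    Fin.val_flipLowBit, Fin.ext_iff]
  congr 1
  apply propext
  split_ifs <;> omega

theorem Sn_eq_permMatrix (n : ℕ) : Sn n = (finRotate (2 ^ n))⁻¹.permMatrix ℝ := by
  ext i j
  rw [← transpose_permMatrix]
  have := j.neZero
  simp only [Sn, of_apply, transpose_apply, PEquiv.toMatrix_apply, Equiv.toPEquiv_apply,
    Option.mem_some_iff, finRotate_apply, Fin.ext_iff, Fin.val_add, Fin.val_one', Nat.add_mod_mod]
  congr 1
  exact propext eq_comm

theorem IZ_eq_diagonal_s13 (n : ℕ) : IZ n = diagonal (paritySign n) := by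
  ext i j
  simp only [IZ, paritySign, of_apply, diagonal_apply]

theorem Cnm_eq_diagonal_mul_Xpow (n : ℕ) : Cnm n = diagonal (endpointSign n) * Xpow n := by
  ext i j
  simp only [Cnm, Xpow, endpointSign, diagonal_mul, of_apply]
  have := i.isLt
  have := j.isLt
  generalize 2 ^ n = N at *
  split_ifs <;> first | omega | norm_num

theorem Xpow_mul_Cnm (n : ℕ) : Xpow n * Cnm n = diagonal (endpointSign n) := by
  ext i j
  rw [Xpow_eq_permMatrix, PEquiv.toMatrix_toPEquiv_mul]
  simp only [submatrix_apply, Fin.revPerm_apply, id, Cnm, of_apply, diagonal_apply, endpointSign,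
    Fin.ext_iff, Fin.val_rev]
  have := i.isLt
  have := j.isLt
  generalize 2 ^ n = N at *
  split_ifs <;> first | rfl | omega

theorem A3_eq_decomposition {n : ℕ} (hn : 2 ≤ n) (a0 a1 h : ℝ) :
    A3 n a0 a1 h =
      ((-4 + (a0 - a1)*h)/2) • (1 : Matrix (Fin (2^n)) (Fin (2^n)) ℝ)
        + (1/2 : ℝ) • IX n
        - (1/2 : ℝ) • Xpow n
        + ((a0 + a1)*h/2) • IZ n
        + Sn n + (Sn n)ᵀ
        - (1/2 : ℝ) • Cnm n
        + ((a0 - a1)*h/2) • (Xpow n * Cnm n)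
        + ((a0 + a1)*h/2) • (Xpow n * Cnm n * IZ n)
        + (1/2 : ℝ) • (Xpow n * Cnm n * IX n) := by
  rw [Xpow_mul_Cnm, IZ_eq_diagonal_s13, diagonal_mul_diagonal]
  ext i j
  simp only [Matrix.add_apply, Matrix.sub_apply, Matrix.smul_apply, smul_eq_mul, one_apply,
    diagonal_apply, diagonal_mul, transpose_apply, A3, Sn, Xpow, Cnm, IX, of_apply, endpointSign,
    paritySign, Fin.ext_iff, add_one_mod_of_lt i.isLt, add_one_mod_of_lt j.isLt]
  have := i.isLt
  have := j.isLt
  have : 4 ∣ 2 ^ n := Nat.pow_dvd_pow 2 hn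
  generalize 2 ^ n = N at *
  -- `split_ifs` would enumerate every sign pattern; splitting one `if` at a time lets `omega`
  -- discard inconsistent branches early.
  repeat' (first | (exfalso; omega) | split)
  all_goals ring

theorem stmt_13 (n : ℕ) (hn : 2 ≤ n) (a0 a1 h : ℝ) :
    (A3 n a0 a1 h =
      ((-4 + (a0 - a1)*h)/2) • (1 : Matrix (Fin (2^n)) (Fin (2^n)) ℝ)
        + (1/2 : ℝ) • IX n
        - (1/2 : ℝ) • Xpow n
        + ((a0 + a1)*h/2) • IZ n
        + Sn n + (Sn n)ᵀ
        - (1/2 : ℝ) • Cnm n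
        + ((a0 - a1)*h/2) • (Xpow n * Cnm n)
        + ((a0 + a1)*h/2) • (Xpow n * Cnm n * IZ n)
        + (1/2 : ℝ) • (Xpow n * Cnm n * IX n)) ∧
    ∀ M ∈ ([1, IX n, Xpow n, IZ n, Sn n, (Sn n)ᵀ, Cnm n,
        Xpow n * Cnm n, Xpow n * Cnm n * IZ n, Xpow n * Cnm n * IX n] :
        List (Matrix (Fin (2^n)) (Fin (2^n)) ℝ)),
      M * Mᵀ = 1 := by
  refine ⟨A3_eq_decomposition hn a0 a1 h, ?_⟩
  have hIX : IX n ∈ orthogonalGroup _ ℝ :=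
    IX_eq_permMatrix (show n ≠ 0 by omega) ▸ permMatrix_mem_orthogonalGroup _
  have hX : Xpow n ∈ orthogonalGroup _ ℝ :=
    Xpow_eq_permMatrix n ▸ permMatrix_mem_orthogonalGroup _
  have hZ : IZ n ∈ orthogonalGroup _ ℝ :=
    IZ_eq_diagonal_s13 n ▸ diagonal_mem_orthogonalGroup (paritySign_mul_self n)
  have hS : Sn n ∈ orthogonalGroup _ ℝ :=
    Sn_eq_permMatrix n ▸ permMatrix_mem_orthogonalGroup _
  have hST : (Sn n)ᵀ ∈ orthogonalGroup _ ℝ := by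
    rw [Sn_eq_permMatrix, transpose_permMatrix]; exact permMatrix_mem_orthogonalGroup _
  have hC : Cnm n ∈ orthogonalGroup _ ℝ := Cnm_eq_diagonal_mul_Xpow n ▸
    mul_mem (diagonal_mem_orthogonalGroup (endpointSign_mul_self n)) hX
  have hXC := mul_mem hX hC
  simp only [List.forall_mem_cons, ← mem_orthogonalGroup_iff]
  exact ⟨one_mem _, hIX, hX, hZ, hS, hST, hC, hXC, mul_mem hXC hZ, mul_mem hXC hIX,
    fun _ hM => (List.not_mem_nil hM).elim⟩
end
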